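/- arXiv:1705.08108 — 3 statements merged into one kernel-verified Lean document; each statement's English description precedes it below -/
import Mathlib

section
/- Let n ≥ 2 and consider the map f : S^{n-1} → S^{n-1} given by f(x) = -x (the antipodal/inversion map). If ω is a differential (n-1)-form on S^{n-1} satisfying f*ω = (-1)^n ω, then for any two distinct points x₁, x₂ ∈ ℝ^n, the integral over y ∈ ℝ^n \ {x₁,x₂} of the wedge product of the pullbacks of ω under the two direction maps y ↦ (y-x₁)/|y-x₁| and y ↦ (y-x₂)/|y-x₂| vanishes. -/
open MeasureTheory

/-!
STATEMENT 0: Let `n ≥ 2` and let `f : S^{n-1} → S^{n-1}` be the antipodal map `f(x) = -x`.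
If `ω` is a differential `(n-1)`-form on `S^{n-1}` (extended to `ℝ^n \ {0}`) satisfying
`f*ω = (-1)^n ω`, then for any two distinct points `x₁, x₂ ∈ ℝ^n`, the integral over
`y ∈ ℝ^n` of (the relevant top-degree component of) the wedge product `π₁*ω ∧ π₂*ω` of the
pullbacks of `ω` under the two direction maps `y ↦ (y-x₁)/|y-x₁|` and `y ↦ (y-x₂)/|y-x₂|`
vanishes.

Here, as in the fiber-integral interpretation, the direction maps are regarded as maps on the
configuration space `ℝ^n × ℝ^n × ℝ^n ∋ (x₁, x₂, y)`; the wedge `π₁*ω ∧ π₂*ω` is a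
`(2n-2)`-form there, and the statement is that for each fixed choice of `n - 2` "horizontal"
vectors `w_j` (constant in the `x₁, x₂` directions) the coefficient obtained by evaluating the
wedge on the `n` "vertical" coordinate vectors `∂/∂y_i` together with the `w_j`'s integrates to
zero over the fiber `y ∈ ℝ^n`.

The pullback of an alternating form under a map `g` at `p` evaluates the form at `g p` on the
images of the input vectors under the derivative `D g (p)`; the wedge of two scalar-valued
alternating forms is `AlternatingMap.domCoprod` followed by the identification `ℝ ⊗ ℝ ≅ ℝ`.
-/

noncomputable section

variable (n : ℕ)

/-- The configuration space of `(x₁, x₂, y)`. -/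
abbrev Conf3 := EuclideanSpace ℝ (Fin n) × EuclideanSpace ℝ (Fin n) × EuclideanSpace ℝ (Fin n)

/-- Direction map `π₁ : (x₁, x₂, y) ↦ (y - x₁)/|y - x₁|`. -/
def dirMap1 (p : Conf3 n) : EuclideanSpace ℝ (Fin n) := ‖p.2.2 - p.1‖⁻¹ • (p.2.2 - p.1)

/-- Direction map `π₂ : (x₁, x₂, y) ↦ (y - x₂)/|y - x₂|`. -/
def dirMap2 (p : Conf3 n) : EuclideanSpace ℝ (Fin n) := ‖p.2.2 - p.2.1‖⁻¹ • (p.2.2 - p.2.1)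

/-- The pullback `(g*ω)_p` of an `(n-1)`-form `ω` under `g` at the point `p`. -/
def formPullback
    (ω : EuclideanSpace ℝ (Fin n) →
      AlternatingMap ℝ (EuclideanSpace ℝ (Fin n)) ℝ (Fin (n - 1)))
    (g : Conf3 n → EuclideanSpace ℝ (Fin n)) (p : Conf3 n) :
    AlternatingMap ℝ (Conf3 n) ℝ (Fin (n - 1)) :=
  (ω (g p)).compLinearMap (fderiv ℝ g p : Conf3 n →ₗ[ℝ] EuclideanSpace ℝ (Fin n))

/-!
Let `R (x₁, x₂, y) = (x₁, x₂, x₁ + x₂ - y)`. Since `π₁ ∘ R = -π₂`, `π₂ ∘ R = -π₁` and `ω` is odd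
(for an `(n-1)`-form, `f*ω = (-1)^n ω` means `ω (-x) = -ω x`), the wedge `π₁*ω ∧ π₂*ω` at `R p` is
`π₂*ω ∧ π₁*ω` at `p` composed with `T = -DR`. Reordering the factors costs `(-1)^(n-1)`. The map `T`
fixes the `n` vertical vectors and sends each horizontal one to its negative plus a vertical vector,
which an alternating form evaluated together with all vertical vectors ignores; this costs
`(-1)^(n-2)`. So the integrand is odd about `(x₁ + x₂) / 2`, and its integral vanishes because the
reflection `y ↦ x₁ + x₂ - y` preserves Lebesgue measure.
-/

theorem Equiv.Perm.sign_sumComm (ι : Type*) [Fintype ι] [DecidableEq ι] :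
    Equiv.Perm.sign (Equiv.sumComm ι ι) = (-1) ^ Fintype.card ι := by
  rw [← Equiv.Perm.sign_eq_sign_of_equiv (Equiv.prodCongrLeft fun _ : ι => Equiv.swap false true)
    _ (Equiv.boolProdEquivSum ι) (by rintro ⟨_ | _, _⟩ <;> rfl),
    Equiv.Perm.sign_prodCongrLeft]
  simp

theorem MultilinearMap.alternatization_domCoprod_comm_apply {R M N₁ N₂ ι : Type*} [CommRing R]
    [AddCommGroup M] [Module R M] [AddCommGroup N₁] [Module R N₁] [AddCommGroup N₂] [Module R N₂]
    [Fintype ι] [DecidableEq ι] (a : MultilinearMap R (fun _ : ι => M) N₁)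
    (b : MultilinearMap R (fun _ : ι => M) N₂) (v : ι ⊕ ι → M) :
    alternatization (b.domCoprod a) v =
      Equiv.Perm.sign (Equiv.sumComm ι ι) •
        TensorProduct.comm R N₁ N₂ (alternatization (a.domCoprod b) v) := by
  simp only [alternatization_apply, _root_.map_sum, Finset.smul_sum]
  refine Fintype.sum_equiv (Equiv.mulRight (Equiv.sumComm ι ι)) _ _ fun σ => ?_
  simp only [Equiv.coe_mulRight, Equiv.Perm.sign_mul, domDomCongr_apply, domCoprod_apply]
  rw [mul_comm, mul_smul, map_zsmul_unit, map_zsmul_unit, smul_smul, Int.units_mul_self, one_smul,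
    TensorProduct.comm_tmul]
  rfl

namespace AlternatingMap

section CommSemiring

variable {R M M' N₁ N₂ ιa ιb : Type*} [CommSemiring R] [AddCommMonoid M] [Module R M]
  [AddCommMonoid M'] [Module R M'] [AddCommGroup N₁] [Module R N₁] [AddCommGroup N₂] [Module R N₂]

theorem neg_compLinearMap (f : M [⋀^ιa]→ₗ[R] N₁) (g : M' →ₗ[R] M) :
    (-f).compLinearMap g = -f.compLinearMap g := by
  ext v
  simp

variable [Fintype ιa] [Fintype ιb] [DecidableEq ιa] [DecidableEq ιb]

theorem domCoprod_compLinearMap (a : M [⋀^ιa]→ₗ[R] N₁) (b : M [⋀^ιb]→ₗ[R] N₂) (g : M' →ₗ[R] M) :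
    (a.compLinearMap g).domCoprod (b.compLinearMap g) = (a.domCoprod b).compLinearMap g := by
  ext v
  simp only [domCoprod_apply, compLinearMap_apply, _root_.sum_apply]
  refine Finset.sum_congr rfl fun σ _ => ?_
  induction σ using Quotient.inductionOn'
  rfl

theorem neg_domCoprod_neg (a : M [⋀^ιa]→ₗ[R] N₁) (b : M [⋀^ιb]→ₗ[R] N₂) :
    (-a).domCoprod (-b) = a.domCoprod b := by
  rw [← domCoprod'_apply, TensorProduct.neg_tmul, TensorProduct.tmul_neg, neg_neg, domCoprod'_apply]

end CommSemiring

variable {K M N N₁ N₂ ι : Type*} [Field K] [AddCommGroup M] [Module K M] [AddCommGroup N]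
  [Module K N] [AddCommGroup N₁] [Module K N₁] [AddCommGroup N₂] [Module K N₂]
  [Fintype ι] [DecidableEq ι]

-- `alternatization (a.domCoprod b) = ((#ι)! * (#ι)!) • a.domCoprod b`; the factor cancels in
-- characteristic zero.
theorem domCoprod_comm_apply [CharZero K] (a : M [⋀^ι]→ₗ[K] N₁) (b : M [⋀^ι]→ₗ[K] N₂)
    (v : ι ⊕ ι → M) :
    b.domCoprod a v =
      Equiv.Perm.sign (Equiv.sumComm ι ι) • TensorProduct.comm K N₁ N₂ (a.domCoprod b v) := by
  have h := MultilinearMap.alternatization_domCoprod_comm_apply a.toMultilinearMap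
    b.toMultilinearMap v
  rw [MultilinearMap.domCoprod_alternization_eq, MultilinearMap.domCoprod_alternization_eq,
    smul_apply, smul_apply, map_nsmul, smul_comm, mul_comm, ← Nat.cast_smul_eq_nsmul K,
    ← Nat.cast_smul_eq_nsmul K] at h
  exact smul_right_injective _ (Nat.cast_ne_zero.2 (by positivity)) h

-- Expand `f (z + v)` multilinearly: every term other than `f v` has a zero entry or an entry
-- in the span of the others.
theorem map_add_eq_of_mem_span (f : M [⋀^ι]→ₗ[K] N) {v z : ι → M} {U : Set ι}
    (hzU : ∀ i ∈ U, z i = 0) (hz : ∀ i, z i ∈ Submodule.span K (v '' U)) :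
    f (v + z) = f v := by
  rw [add_comm, f.map_add_univ, Finset.sum_eq_single ∅ _ (by simp), Finset.piecewise_empty]
  intro S _ hS
  apply f.map_linearDependent
  intro hli
  obtain ⟨i, hi⟩ := Finset.nonempty_iff_ne_empty.2 hS
  by_cases hSU : ∀ j ∈ S, j ∉ U
  · have hv : S.piecewise z v '' U = v '' U :=
      Set.image_congr fun j hj => S.piecewise_eq_of_notMem _ _ fun hjS => hSU j hjS hj
    refine hli.notMem_span_image (hSU i hi) ?_
    rw [hv, S.piecewise_eq_of_mem _ _ hi]
    exact hz i
  · simp only [not_forall, not_not] at hSU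
    obtain ⟨j, hjS, hjU⟩ := hSU
    exact hli.ne_zero j (by rw [S.piecewise_eq_of_mem _ _ hjS, hzU j hjU])

theorem map_sumElim_neg_add {κ₁ κ₂ : Type*} [Fintype κ₁] [Fintype κ₂] {e : ι → κ₁ ⊕ κ₂}
    (he : e.Bijective) (f : M [⋀^ι]→ₗ[K] N) (a : κ₁ → M) (b c : κ₂ → M)
    (hc : ∀ j, c j ∈ Submodule.span K (Set.range a)) :
    f (fun i => Sum.elim a (-b + c) (e i)) =
      (-1 : K) ^ Fintype.card κ₂ • f (fun i => Sum.elim a b (e i)) := by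
  have hcorr : f (fun i => Sum.elim a (-b + c) (e i)) = f (fun i => Sum.elim a (-b) (e i)) := by
    have hsplit : (fun i => Sum.elim a (-b + c) (e i)) =
        (fun i => Sum.elim a (-b) (e i)) + fun i => Sum.elim (0 : κ₁ → M) c (e i) := by
      funext i; rw [Pi.add_apply]; cases e i <;> simp
    rw [hsplit]
    refine f.map_add_eq_of_mem_span (U := e ⁻¹' Set.range Sum.inl) ?_ fun i => ?_
    · rintro i ⟨k, hk⟩
      simp [← hk]
    · have hrange :
          Set.range a ⊆ (fun i => Sum.elim a (-b) (e i)) '' (e ⁻¹' Set.range Sum.inl) := by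
        rintro _ ⟨k, rfl⟩
        obtain ⟨i, hi⟩ := he.2 (Sum.inl k)
        exact ⟨i, ⟨k, hi.symm⟩, by simp [hi]⟩
      rcases e i with k | j
      · exact zero_mem _
      · exact Submodule.span_mono hrange (hc j)
  have hsign : (fun i => Sum.elim a (-b) (e i)) =
      fun i => Sum.elim (fun _ => (1 : K)) (fun _ => -1) (e i) • Sum.elim a b (e i) := by
    funext i; cases e i <;> simp
  rw [hcorr, hsign, f.map_smul_univ, he.prod_comp (Sum.elim _ _), Fintype.prod_sum_type]
  simp

end AlternatingMap

theorem Function.Odd.fderiv_neg {𝕜 E F : Type*} [NontriviallyNormedField 𝕜] [NormedAddCommGroup E]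
    [NormedSpace 𝕜 E] [NormedAddCommGroup F] [NormedSpace 𝕜 F] {f : E → F} (hf : f.Odd) (x : E) :
    fderiv 𝕜 f (-x) = fderiv 𝕜 f x := by
  have h := (ContinuousLinearEquiv.neg 𝕜 (M := E)).comp_right_fderiv (f := f) (x := x)
  rw [show f ∘ ContinuousLinearEquiv.neg 𝕜 = -f from funext hf, _root_.fderiv_neg] at h
  ext v
  simpa using congr($h (-v)).symm

theorem integral_eq_zero_of_ae_sub_eq_neg {G F : Type*} [MeasurableSpace G] [AddGroup G]
    [MeasurableAdd G] [MeasurableNeg G] [NormedAddCommGroup F] [NormedSpace ℝ F] {μ : Measure G}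
    [μ.IsNegInvariant] [μ.IsAddLeftInvariant] {f : G → F} (c : G)
    (h : ∀ᵐ y ∂μ, f (c - y) = -f y) :
    ∫ y, f y ∂μ = 0 := by
  have hneg := integral_sub_left_eq_self f μ c
  rw [integral_congr_ae h, integral_neg] at hneg
  have h2 : (2 : ℝ) • ∫ y, f y ∂μ = 0 := by
    rw [two_smul]; nth_rewrite 1 [← hneg]; exact neg_add_cancel _
  exact (smul_eq_zero.1 h2).resolve_left two_ne_zero

section Pullback

variable {𝕜 E E' F G ι : Type*} [NontriviallyNormedField 𝕜] [NormedAddCommGroup E]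
  [NormedSpace 𝕜 E] [NormedAddCommGroup E'] [NormedSpace 𝕜 E'] [NormedAddCommGroup F]
  [NormedSpace 𝕜 F] [AddCommGroup G] [Module 𝕜 G]

def formPullbackAt (ω : F → F [⋀^ι]→ₗ[𝕜] G) (g : E → F) (p : E) : E [⋀^ι]→ₗ[𝕜] G :=
  (ω (g p)).compLinearMap (fderiv 𝕜 g p)

theorem formPullbackAt_comp (ω : F → F [⋀^ι]→ₗ[𝕜] G) {g : E → F} (L : E' →L[𝕜] E) {p : E'}
    (hg : DifferentiableAt 𝕜 g (L p)) :
    formPullbackAt ω (g ∘ L) p = (formPullbackAt ω g (L p)).compLinearMap L := by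
  rw [formPullbackAt, fderiv_comp p hg L.differentiableAt, L.fderiv]
  rfl

theorem formPullbackAt_neg {ω : F → F [⋀^ι]→ₗ[𝕜] G} (hω : ∀ x, ω (-x) = -ω x) {g : E → F}
    (hg : g.Odd) (p : E) :
    formPullbackAt ω g (-p) = -formPullbackAt ω g p := by
  rw [formPullbackAt, formPullbackAt, hg, hω, hg.fderiv_neg, AlternatingMap.neg_compLinearMap]

end Pullback

section UnitVec

variable {E : Type*} [NormedAddCommGroup E] [InnerProductSpace ℝ E]

def unitVec (z : E) : E := ‖z‖⁻¹ • z

theorem unitVec_odd : (unitVec : E → E).Odd := fun z => by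
  simp [unitVec]

theorem differentiableAt_unitVec {z : E} (hz : z ≠ 0) : DifferentiableAt ℝ unitVec z :=
  ((differentiableAt_id.norm ℝ hz).inv (norm_ne_zero_iff.2 hz)).smul differentiableAt_id

end UnitVec

theorem neg_eq_of_antipodal {E : Type*} [AddCommGroup E] [Module ℝ E] (hn : 1 ≤ n)
    {ω : E → E [⋀^Fin (n - 1)]→ₗ[ℝ] ℝ}
    (hω : ∀ x v, ω (-x) (fun i => -v i) = (-1 : ℝ) ^ n * ω x v) (x : E) :
    ω (-x) = -ω x := by
  ext v
  have hneg := (ω x).map_smul_univ (fun _ => (-1 : ℝ)) v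
  simp only [neg_one_smul, Finset.prod_const, Finset.card_univ, Fintype.card_fin] at hneg
  have hsign : (-1 : ℝ) ^ n * (-1) ^ (n - 1) = -1 := by
    rw [← pow_add]
    exact Odd.neg_one_pow ⟨n - 1, by omega⟩
  calc ω (-x) v = ω (-x) (fun i => -(-v i)) := by simp only [neg_neg]
    _ = (-1) ^ n * ((-1) ^ (n - 1) * ω x v) := by rw [hω, hneg, smul_eq_mul]
    _ = (-ω x) v := by rw [← mul_assoc, hsign, neg_one_mul, AlternatingMap.neg_apply]

local notation "𝔼" => EuclideanSpace ℝ (Fin n)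

def relPos₁ : Conf3 n →L[ℝ] 𝔼 :=
  (ContinuousLinearMap.snd ℝ 𝔼 𝔼).comp (ContinuousLinearMap.snd ℝ 𝔼 (𝔼 × 𝔼)) -
    ContinuousLinearMap.fst ℝ 𝔼 (𝔼 × 𝔼)

def relPos₂ : Conf3 n →L[ℝ] 𝔼 :=
  (ContinuousLinearMap.snd ℝ 𝔼 𝔼).comp (ContinuousLinearMap.snd ℝ 𝔼 (𝔼 × 𝔼)) -
    (ContinuousLinearMap.fst ℝ 𝔼 𝔼).comp (ContinuousLinearMap.snd ℝ 𝔼 (𝔼 × 𝔼))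

@[simp] theorem relPos₁_apply (p : Conf3 n) : relPos₁ n p = p.2.2 - p.1 := rfl

@[simp] theorem relPos₂_apply (p : Conf3 n) : relPos₂ n p = p.2.2 - p.2.1 := rfl

/-- Minus the differential of `(x₁, x₂, y) ↦ (x₁, x₂, x₁ + x₂ - y)`; with this sign it exchanges
`relPos₁` and `relPos₂` exactly. -/
def relPosSwap : Conf3 n →ₗ[ℝ] Conf3 n where
  toFun p := (-p.1, -p.2.1, p.2.2 - p.1 - p.2.1)
  map_add' p q := by
    ext <;> simp <;> abel
  map_smul' c p := by
    ext <;> simp [smul_sub]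

@[simp] theorem relPosSwap_apply (p : Conf3 n) :
    relPosSwap n p = (-p.1, -p.2.1, p.2.2 - p.1 - p.2.1) := rfl

theorem relPos₁_comp_relPosSwap : (relPos₁ n : Conf3 n →ₗ[ℝ] 𝔼) ∘ₗ relPosSwap n = relPos₂ n := by
  ext p <;> simp

theorem relPos₂_comp_relPosSwap : (relPos₂ n : Conf3 n →ₗ[ℝ] 𝔼) ∘ₗ relPosSwap n = relPos₁ n := by
  ext p <;> simp

theorem vertical_mem_span (x : 𝔼) :
    ((0, 0, x) : Conf3 n) ∈
      Submodule.span ℝ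
        (Set.range fun i : Fin n => ((0, 0, EuclideanSpace.single i 1) : Conf3 n)) := by
  have hrange : (Set.range fun i : Fin n => ((0, 0, EuclideanSpace.single i 1) : Conf3 n)) =
      (LinearMap.inr ℝ 𝔼 (𝔼 × 𝔼) ∘ₗ LinearMap.inr ℝ 𝔼 𝔼) ''
        Set.range (EuclideanSpace.basisFun (Fin n) ℝ).toBasis := by
    rw [← Set.range_comp]
    simp [Function.comp_def]
  rw [hrange, Submodule.span_image, (EuclideanSpace.basisFun (Fin n) ℝ).toBasis.span_eq,
    Submodule.map_top]
  exact ⟨x, rfl⟩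

theorem map_relPosSwap_frame {ι κ N : Type*} [Fintype ι] [DecidableEq ι] [Fintype κ]
    [AddCommGroup N] [Module ℝ N] (f : Conf3 n [⋀^ι]→ₗ[ℝ] N) {e : ι → Fin n ⊕ κ}
    (he : e.Bijective) (w : κ → 𝔼 × 𝔼) :
    f (fun s => relPosSwap n (Sum.elim (fun i => ((0, 0, EuclideanSpace.single i 1) : Conf3 n))
        (fun j => ((w j).1, (w j).2, 0)) (e s))) =
      (-1 : ℝ) ^ Fintype.card κ • f (fun s => Sum.elim
        (fun i => ((0, 0, EuclideanSpace.single i 1) : Conf3 n))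
        (fun j => ((w j).1, (w j).2, 0)) (e s)) := by
  have hswap : (fun s => relPosSwap n (Sum.elim
      (fun i => ((0, 0, EuclideanSpace.single i 1) : Conf3 n))
      (fun j => ((w j).1, (w j).2, 0)) (e s))) =
      fun s => Sum.elim (fun i => ((0, 0, EuclideanSpace.single i 1) : Conf3 n))
        (-(fun j => ((w j).1, (w j).2, 0)) + fun j => (0, 0, -((w j).1 + (w j).2))) (e s) := by
    funext s
    cases e s <;> simp [sub_eq_add_neg, add_comm]
  rw [hswap, f.map_sumElim_neg_add he]
  exact fun j => vertical_mem_span n _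

theorem formPullback_dirMap1 (ω : 𝔼 → 𝔼 [⋀^Fin (n - 1)]→ₗ[ℝ] ℝ) {p : Conf3 n}
    (hp : relPos₁ n p ≠ 0) :
    formPullback n ω (dirMap1 n) p =
      (formPullbackAt ω unitVec (relPos₁ n p)).compLinearMap (relPos₁ n) :=
  formPullbackAt_comp ω (relPos₁ n) (differentiableAt_unitVec hp)

theorem formPullback_dirMap2 (ω : 𝔼 → 𝔼 [⋀^Fin (n - 1)]→ₗ[ℝ] ℝ) {p : Conf3 n}
    (hp : relPos₂ n p ≠ 0) :
    formPullback n ω (dirMap2 n) p =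
      (formPullbackAt ω unitVec (relPos₂ n p)).compLinearMap (relPos₂ n) :=
  formPullbackAt_comp ω (relPos₂ n) (differentiableAt_unitVec hp)

theorem domCoprod_formPullback_reflect {ω : 𝔼 → 𝔼 [⋀^Fin (n - 1)]→ₗ[ℝ] ℝ}
    (hω : ∀ x, ω (-x) = -ω x) {x₁ x₂ y : 𝔼} (hy₁ : y ≠ x₁) (hy₂ : y ≠ x₂) :
    (formPullback n ω (dirMap1 n) (x₁, x₂, x₁ + x₂ - y)).domCoprod
        (formPullback n ω (dirMap2 n) (x₁, x₂, x₁ + x₂ - y)) =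
      ((formPullback n ω (dirMap2 n) (x₁, x₂, y)).domCoprod
        (formPullback n ω (dirMap1 n) (x₁, x₂, y))).compLinearMap (relPosSwap n) := by
  have h₁ : x₁ + x₂ - y - x₁ = -(y - x₂) := by abel
  have h₂ : x₁ + x₂ - y - x₂ = -(y - x₁) := by abel
  have hy₁' : y - x₁ ≠ 0 := sub_ne_zero.2 hy₁
  have hy₂' : y - x₂ ≠ 0 := sub_ne_zero.2 hy₂
  rw [formPullback_dirMap1 n ω (show x₁ + x₂ - y - x₁ ≠ 0 by rw [h₁]; exact neg_ne_zero.2 hy₂'),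
    formPullback_dirMap2 n ω (show x₁ + x₂ - y - x₂ ≠ 0 by rw [h₂]; exact neg_ne_zero.2 hy₁'),
    formPullback_dirMap1 n ω (by simpa using hy₁'), formPullback_dirMap2 n ω (by simpa using hy₂'),
    ← AlternatingMap.domCoprod_compLinearMap]
  simp only [relPos₁_apply, relPos₂_apply, h₁, h₂, formPullbackAt_neg hω unitVec_odd,
    AlternatingMap.neg_compLinearMap, AlternatingMap.neg_domCoprod_neg,
    AlternatingMap.compLinearMap_assoc, relPos₁_comp_relPosSwap, relPos₂_comp_relPosSwap]

theorem stmt_0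
    (hn : 2 ≤ n)
    (ω : EuclideanSpace ℝ (Fin n) →
      AlternatingMap ℝ (EuclideanSpace ℝ (Fin n)) ℝ (Fin (n - 1)))
    -- `f*ω = (-1)^n ω` for the antipodal map `f(x) = -x`
    (hω : ∀ (x : EuclideanSpace ℝ (Fin n)) (v : Fin (n - 1) → EuclideanSpace ℝ (Fin n)),
      ω (-x) (fun i => -(v i)) = (-1 : ℝ) ^ n * ω x v)
    (x₁ x₂ : EuclideanSpace ℝ (Fin n))
    -- arbitrary constant horizontal vectors, filling the remaining `n - 2` slots
    (w : Fin (n - 2) → EuclideanSpace ℝ (Fin n) × EuclideanSpace ℝ (Fin n)) :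
    (∫ y : EuclideanSpace ℝ (Fin n),
      (TensorProduct.lid ℝ ℝ)
        (((formPullback n ω (dirMap1 n) (x₁, x₂, y)).domCoprod
            (formPullback n ω (dirMap2 n) (x₁, x₂, y)))
          (fun s : Fin (n - 1) ⊕ Fin (n - 1) =>
            Sum.elim
              -- the `n` vertical vectors `∂/∂y_i` …
              (fun i : Fin n =>
                ((0, 0, EuclideanSpace.single i (1 : ℝ)) : Conf3 n))
              -- … and the `n-2` horizontal vectors `w_j`
              (fun j : Fin (n - 2) => (((w j).1, (w j).2, 0) : Conf3 n))
              (finSumFinEquiv.symm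
                ((finCongr (by omega : (n - 1) + (n - 1) = n + (n - 2)))
                  (finSumFinEquiv s)))))) = 0 := by
  have hω' := neg_eq_of_antipodal n (by omega) hω
  have : Nonempty (Fin n) := ⟨⟨0, by omega⟩⟩
  refine integral_eq_zero_of_ae_sub_eq_neg (x₁ + x₂) ?_
  filter_upwards [(Set.toFinite {x₁, x₂}).countable.ae_notMem volume] with y hy
  simp only [Set.mem_insert_iff, Set.mem_singleton_iff, not_or] at hy
  rw [domCoprod_formPullback_reflect n hω' hy.1 hy.2, AlternatingMap.compLinearMap_apply,
    map_relPosSwap_frame n, AlternatingMap.domCoprod_comm_apply, Equiv.Perm.sign_sumComm]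
  · rw [map_smul, map_zsmul_unit, TensorProduct.lid_comm, ← TensorProduct.lid_eq_rid,
      Units.smul_def, Fintype.card_fin, Fintype.card_fin, zsmul_eq_mul, smul_eq_mul, ← mul_assoc]
    convert neg_one_mul _ using 2
    push_cast
    rw [← pow_add]
    exact Odd.neg_one_pow ⟨n - 2, by omega⟩
  · exact finSumFinEquiv.symm.bijective.comp ((finCongr _).bijective.comp finSumFinEquiv.bijective)

end
end

section
/- Let R = ℝ[P₄,…,P_{2n-4}, E] and S = ℝ[u, P'₄,…,P'_{2n-8}, E'] be polynomial rings (graded, with deg u = 2), and let φ : R → S_u = S[u^{-1}] be the graded ring map φ(E) = uE', φ(P_{2n-4}) = u²P'_{2n-8} + E'², φ(P_j) = u²P'_{j-4} + P'_j for 4 ≤ j ≤ 2n−8 (with P'₀ := 1). Then φ is injective. -/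
/-!
STATEMENT 14: Let `R = ℝ[P₄, …, P_{2n-4}, E]` and `S = ℝ[u, P'₄, …, P'_{2n-8}, E']` be graded
polynomial rings (`deg u = 2`), and let `φ : R → S_u = S[u⁻¹]` be the graded ring map
`φ(E) = u·E'`, `φ(P_{2n-4}) = u²·P'_{2n-8} + E'²`, and `φ(P_j) = u²·P'_{j-4} + P'_j` for
`4 ≤ j ≤ 2n-8` (with `P'₀ := 1`).  Then `φ` is injective.

We write `m` for the number of Pontryagin generators of the source (`P₄, …, P_{4m}` with
`4m = 2n - 4`), so the source is the polynomial ring on `Fin m ⊕ Unit` (`inl i ↦ P_{4(i+1)}`,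
`inr () ↦ E`), and the target `S[u⁻¹]` is the ring of Laurent polynomials in `u` over the
polynomial ring on `Fin (m-1) ⊕ Unit` (`inl i ↦ P'_{4(i+1)}`, `inr () ↦ E'`); `u = T 1`
and `u² = T 2` in Laurent polynomial notation.  We assume `m ≥ 2` (i.e. `n ≥ 6`, so that
`P'_{2n-8}` exists, as in the statement).
-/

open MvPolynomial LaurentPolynomial

/-- The restriction map `H(BSO(n)) → H(B(SO(2)×SO(n-2)))[u⁻¹]` for `n` even. -/
noncomputable def evenRestriction (m : ℕ) (hm : 2 ≤ m) :
    MvPolynomial (Fin m ⊕ Unit) ℝ →ₐ[ℝ]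
      LaurentPolynomial (MvPolynomial (Fin (m - 1) ⊕ Unit) ℝ) :=
  MvPolynomial.aeval (fun v : Fin m ⊕ Unit =>
    match v with
    | Sum.inr _ =>
        -- E ↦ u·E'
        T 1 * LaurentPolynomial.C (X (Sum.inr ()))
    | Sum.inl i =>
        if h : (i : ℕ) = m - 1 then
          -- top class: P_{2n-4} ↦ u²·P'_{2n-8} + E'²
          T 2 * LaurentPolynomial.C (X (Sum.inl (⟨m - 2, by omega⟩ : Fin (m - 1)))) +
            (LaurentPolynomial.C (X (Sum.inr ()))) ^ 2
        else
          -- P_{4(i+1)} ↦ u²·P'_{4i} + P'_{4(i+1)}, with P'₀ = 1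
          T 2 * (if h0 : (i : ℕ) = 0 then 1
                 else LaurentPolynomial.C
                   (X (Sum.inl (⟨(i : ℕ) - 1, by have := i.isLt; omega⟩ : Fin (m - 1))))) +
            LaurentPolynomial.C
              (X (Sum.inl (⟨(i : ℕ), by have := i.isLt; omega⟩ : Fin (m - 1)))))

/-!
To show that `φ` is injective it suffices to find, over `K` = the algebraic closure of the fraction
field of the source, a ring map `Θ : S[u⁻¹] → K` with `Θ ∘ φ` the inclusion of the source. Send
`u ↦ t`: the equations `P_{4(i+1)} = u²P'_{4i} + P'_{4(i+1)}` then determine the images of the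
`P'_{4i}` recursively as polynomials `D_i(t²)` in `t²`, the equation for `E` forces `E' ↦ E/t`, and
the remaining equation for the top class `P_{2n-4}` becomes a polynomial equation of degree `m + 1`
in `s = t²`. It has a root in `K`, nonzero because its constant term is `E² ≠ 0`, and `t = √s`.
-/

namespace EvenRestriction

/-- The polynomial `D_i`: once `u² ↦ s` and `P_{4(i+1)} ↦ x_i`, the equations
`P_{4(i+1)} = u²P'_{4i} + P'_{4(i+1)}` force `P'_{4i} ↦ D_i(s)`. -/
noncomputable def triangularSolve {R : Type*} [CommRing R] (x : ℕ → R) : ℕ → Polynomial R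
  | 0 => 1
  | i + 1 => Polynomial.C (x i) - Polynomial.X * triangularSolve x i

section TriangularSolve

open Polynomial

variable {R : Type*} [CommRing R] (x : ℕ → R)

@[simp]
theorem triangularSolve_zero : triangularSolve x 0 = 1 := rfl

theorem eval_triangularSolve_succ_add (s : R) (i : ℕ) :
    (triangularSolve x (i + 1)).eval s + s * (triangularSolve x i).eval s = x i := by
  simp [triangularSolve]

variable [Nontrivial R]

theorem natDegree_triangularSolve (i : ℕ) : (triangularSolve x i).natDegree = i := by
  induction i with
  | zero => simp
  | succ i ih =>
    have hne : triangularSolve x i ≠ 0 := by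
      rintro h
      cases i with
      | zero => exact one_ne_zero h
      | succ k => simp [h] at ih
    have hX : (Polynomial.X * triangularSolve x i).natDegree = i + 1 := by
      rw [natDegree_X_mul hne, ih]
    have hlt : (Polynomial.C (x i)).natDegree < (Polynomial.X * triangularSolve x i).natDegree := by
      rw [hX, natDegree_C]
      omega
    rw [triangularSolve, natDegree_sub_eq_right_of_natDegree_lt hlt, hX]

theorem triangularSolve_ne_zero (i : ℕ) : triangularSolve x i ≠ 0 := by
  cases i with
  | zero => exact one_ne_zero
  | succ i => exact ne_zero_of_natDegree_gt (n := 0) (by simp [natDegree_triangularSolve])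

end TriangularSolve

open Polynomial in
theorem exists_ne_zero_sq_mul_eval_triangularSolve_add {K : Type*} [Field K] [IsAlgClosed K]
    (x : ℕ → K) {e : K} (he : e ≠ 0) (n : ℕ) :
    ∃ s ≠ 0, s ^ 2 * (triangularSolve x n).eval s + e ^ 2 = x n * s := by
  set p : K[X] := Polynomial.X ^ 2 * triangularSolve x n +
    (Polynomial.C (e ^ 2) - Polynomial.C (x n) * Polynomial.X)
  have hlead : (Polynomial.X ^ 2 * triangularSolve x n).natDegree = n + 2 := by
    rw [natDegree_X_pow_mul _ (triangularSolve_ne_zero x n), natDegree_triangularSolve]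
  have hlow : (Polynomial.C (e ^ 2) - Polynomial.C (x n) * Polynomial.X).natDegree ≤ 1 := by
    compute_degree
  have hp : p.natDegree = n + 2 := by
    rw [natDegree_add_eq_left_of_natDegree_lt (by omega), hlead]
  obtain ⟨s, hs⟩ := IsAlgClosed.exists_root p fun h => by
    simp [natDegree_eq_of_degree_eq_some h] at hp
  have hs : s ^ 2 * (triangularSolve x n).eval s + e ^ 2 = x n * s := by
    simp only [p, IsRoot.def, Polynomial.eval_add, Polynomial.eval_sub, Polynomial.eval_mul,
      Polynomial.eval_pow, Polynomial.eval_X, Polynomial.eval_C] at hs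
    linear_combination hs
  refine ⟨s, fun hs0 => he ?_, hs⟩
  simpa [hs0] using hs

section LaurentEval

variable {K : Type*} [Field K] [Algebra ℝ K] (k : ℕ) (x : ℕ → K) (e : K) (t : Kˣ)

noncomputable def laurentEval : LaurentPolynomial (MvPolynomial (Fin k ⊕ Unit) ℝ) →ₐ[ℝ] K :=
  { LaurentPolynomial.eval₂
      (aeval (R := ℝ) (σ := Fin k ⊕ Unit)
        (Sum.elim (fun i => (triangularSolve x (i + 1)).eval (t ^ 2 : K)) fun _ => e / t)).toRingHom
      t with
    commutes' := fun r => by simp [LaurentPolynomial.algebraMap_apply] }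

@[simp]
theorem laurentEval_T (n : ℤ) : laurentEval k x e t (T n) = (t : K) ^ n :=
  (LaurentPolynomial.eval₂_T _ _ n).trans (Units.val_zpow_eq_zpow_val t n)

@[simp]
theorem laurentEval_C_X_inl (i : Fin k) :
    laurentEval k x e t (LaurentPolynomial.C (X (Sum.inl i))) =
      (triangularSolve x (i + 1)).eval (t ^ 2 : K) := by
  simp [laurentEval]

@[simp]
theorem laurentEval_C_X_inr :
    laurentEval k x e t (LaurentPolynomial.C (X (Sum.inr ()))) = e / t := by
  simp [laurentEval]

end LaurentEval

theorem laurentEval_comp_evenRestriction {K : Type*} [Field K] [Algebra ℝ K] (m : ℕ) (hm : 2 ≤ m)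
    (v : Fin m ⊕ Unit → K) (x : ℕ → K) (hx : ∀ i : Fin m, v (Sum.inl i) = x i) {t : K} (ht : t ≠ 0)
    (hroot : (t ^ 2) ^ 2 * (triangularSolve x (m - 1)).eval (t ^ 2) + v (Sum.inr ()) ^ 2 =
      x (m - 1) * t ^ 2) :
    (laurentEval (m - 1) x (v (Sum.inr ())) (Units.mk0 t ht)).comp (evenRestriction m hm) =
      aeval v := by
  have hstep := eval_triangularSolve_succ_add x (t ^ 2)
  refine algHom_ext ?_
  rintro (i | ⟨⟩)
  · simp only [AlgHom.comp_apply, evenRestriction, aeval_X, hx]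
    by_cases htop : (i : ℕ) = m - 1
    · rw [dif_pos htop]
      simp only [map_add, map_mul, map_pow, laurentEval_T, laurentEval_C_X_inl, laurentEval_C_X_inr,
        Units.val_mk0, zpow_ofNat, htop, show m - 2 + 1 = m - 1 by omega]
      field_simp
      linear_combination hroot
    rw [dif_neg htop]
    by_cases h0 : (i : ℕ) = 0
    · rw [dif_pos h0]
      simp only [map_add, map_mul, map_one, laurentEval_T, laurentEval_C_X_inl, Units.val_mk0,
        zpow_ofNat, h0]
      have h := hstep 0
      rw [triangularSolve_zero, Polynomial.eval_one] at h
      linear_combination h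
    · rw [dif_neg h0]
      simp only [map_add, map_mul, laurentEval_T, laurentEval_C_X_inl, Units.val_mk0, zpow_ofNat,
        Nat.sub_add_cancel (Nat.pos_of_ne_zero h0)]
      linear_combination hstep i
  · simp only [AlgHom.comp_apply, evenRestriction, aeval_X, map_mul, laurentEval_T,
      laurentEval_C_X_inr, Units.val_mk0, zpow_one]
    field_simp

theorem exists_algHom_comp_evenRestriction_eq {K : Type*} [Field K] [IsAlgClosed K] [Algebra ℝ K]
    (m : ℕ) (hm : 2 ≤ m) (v : Fin m ⊕ Unit → K) (hv : v (Sum.inr ()) ≠ 0) :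
    ∃ Θ : LaurentPolynomial (MvPolynomial (Fin (m - 1) ⊕ Unit) ℝ) →ₐ[ℝ] K,
      Θ.comp (evenRestriction m hm) = aeval v := by
  let x : ℕ → K := fun i => if h : i < m then v (Sum.inl ⟨i, h⟩) else 0
  obtain ⟨s, hs0, hroot⟩ := exists_ne_zero_sq_mul_eval_triangularSolve_add x hv (m - 1)
  obtain ⟨t, rfl⟩ := IsAlgClosed.exists_pow_nat_eq s two_pos
  have ht : t ≠ 0 := by rintro rfl; simp at hs0
  exact ⟨_, laurentEval_comp_evenRestriction m hm v x (fun i => by simp [x]) ht hroot⟩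

end EvenRestriction

open EvenRestriction in
theorem stmt_14 (m : ℕ) (hm : 2 ≤ m) : Function.Injective (evenRestriction m hm) := by
  let R := MvPolynomial (Fin m ⊕ Unit) ℝ
  let K := AlgebraicClosure (FractionRing R)
  have hinj : Function.Injective (algebraMap R K) := by
    rw [IsScalarTower.algebraMap_eq R (FractionRing R) K]
    exact (algebraMap (FractionRing R) K).injective.comp (IsFractionRing.injective R _)
  obtain ⟨Θ, hΘ⟩ := exists_algHom_comp_evenRestriction_eq (K := K) m hm
    (fun v => algebraMap R K (X v)) fun h => X_ne_zero _ (hinj (by simpa using h))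
  have hcomp : Θ.comp (evenRestriction m hm) = IsScalarTower.toAlgHom ℝ R K :=
    hΘ.trans (algHom_ext fun v => by rw [aeval_X, IsScalarTower.toAlgHom_apply])
  refine Function.Injective.of_comp (f := Θ) ?_
  rw [← AlgHom.coe_comp, hcomp]
  exact hinj
end

section
/- Let C be a cochain complex with a complete, Hausdorff descending filtration F₀C ⊇ F₁C ⊇ F₂C ⊇ …, such that each quotient F_nC/F_{n+1}C is degreewise finite-dimensional. Suppose x ∈ F₀C is a cocycle such that for every n there exists y_n with x − ∂y₀ − ⋯ − ∂y_{n-1} ∈ F_nC. Then x is a coboundary: there exists z ∈ C with ∂z = x. -/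
/-- Recursive choice along `ℕ`: from an initial point and a step producing, at each stage,
a correction `w` and a new state `T v w`, extract sequences. -/
lemma stmt16_rec_choice {α β : Type} (Q : ℕ → α → Prop) (R : ℕ → β → Prop) (T : α → β → α)
    (x : α) (h0 : Q 0 x)
    (step : ∀ p v, Q p v → ∃ w : β, R p w ∧ Q (p + 1) (T v w)) :
    ∃ (v : ℕ → α) (w : ℕ → β), v 0 = x ∧
      ∀ p, Q p (v p) ∧ R p (w p) ∧ v (p + 1) = T (v p) (w p) := by
  choose W hR hQ using step
  let g : ∀ p : ℕ, {a : α // Q p a} := fun p =>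
    Nat.rec ⟨x, h0⟩ (fun p prev => ⟨T prev.1 (W p prev.1 prev.2), hQ p prev.1 prev.2⟩) p
  exact ⟨fun p => (g p).1, fun p => W p (g p).1 (g p).2, rfl,
    fun p => ⟨(g p).2, hR _ _ _, rfl⟩⟩

/-- Key step (uses finite-dimensionality of the graded pieces in degree `i`):
if `v` lies in `d(FₚCⁱ) + F_q Cⁱ⁺¹` for every `q`, then one can subtract a single
`d w` with `w ∈ FₚCⁱ` so that the remainder lies in `F_{p+1}Cⁱ⁺¹` and again lies in
`d(F_{p+1}Cⁱ) + F_q Cⁱ⁺¹` for every `q`. -/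
lemma stmt16_key
    (C : ℤ → Type) [∀ i, AddCommGroup (C i)] [∀ i, Module ℝ (C i)]
    (d : ∀ i, C i →ₗ[ℝ] C (i + 1))
    (F : ℕ → ∀ i : ℤ, Submodule ℝ (C i))
    (hmono : ∀ n i, F (n + 1) i ≤ F n i)
    (hfin : ∀ (n : ℕ) (i : ℤ),
      FiniteDimensional ℝ (↥(F n i) ⧸ Submodule.comap (F n i).subtype (F (n + 1) i)))
    (i : ℤ) (p : ℕ) (v : C (i + 1))
    (hv : ∀ q, ∃ w ∈ F p i, v - d i w ∈ F q (i + 1)) :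
    ∃ w ∈ F p i, (v - d i w ∈ F (p + 1) (i + 1)) ∧
      ∀ q, ∃ w' ∈ F (p + 1) i, (v - d i w) - d i w' ∈ F q (i + 1) := by
  have hmono' : ∀ j : ℤ, ∀ {m n : ℕ}, m ≤ n → F n j ≤ F m j := by
    intro j m n hmn
    have h : Antitone (fun n => F n j) := antitone_nat_of_succ_le (fun k => hmono k j)
    exact h hmn
  -- the graded piece in degree i, and the stabilizing chain of subspaces
  set N : Submodule ℝ ↥(F p i) := Submodule.comap (F p i).subtype (F (p + 1) i) with hN
  haveI : FiniteDimensional ℝ (↥(F p i) ⧸ N) := hfin p i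
  set U : ℕ → Submodule ℝ ↥(F p i) :=
    fun q => Submodule.comap ((d i).comp (F p i).subtype) (F q (i + 1)) with hU
  set S : ℕ → Submodule ℝ (↥(F p i) ⧸ N) := fun q => Submodule.map N.mkQ (U q) with hS
  have hSanti : ∀ {a b : ℕ}, a ≤ b → S b ≤ S a := by
    intro a b hab
    exact Submodule.map_mono (fun u hu => hmono' (i + 1) hab hu)
  obtain ⟨Q₀, hQ₀⟩ := IsArtinian.monotone_stabilizes
    (⟨fun q => OrderDual.toDual (S q), fun a b hab => hSanti hab⟩ : ℕ →o (Submodule ℝ (↥(F p i) ⧸ N))ᵒᵈ)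
  set Q := max Q₀ (p + 1) with hQdef
  obtain ⟨wQ, hwQ, hfQ⟩ := hv Q
  refine ⟨wQ, hwQ, hmono' (i + 1) (le_max_right Q₀ (p + 1)) hfQ, ?_⟩
  intro q
  set q' := max q Q with hq'def
  obtain ⟨wq, hwq, hfq⟩ := hv q'
  -- u = wq - wQ has differential in F_Q
  have hdu : d i (wq - wQ) ∈ F Q (i + 1) := by
    have : d i (wq - wQ) = (v - d i wQ) - (v - d i wq) := by
      rw [map_sub]; abel
    rw [this]
    exact sub_mem hfQ (hmono' (i + 1) (le_max_right q Q) hfq)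
  set u : ↥(F p i) := ⟨wq, hwq⟩ - ⟨wQ, hwQ⟩ with hu_def
  have huU : u ∈ U Q := by
    simpa [hU, hu_def] using hdu
  -- stabilization : S Q = S q'
  have hSQ : S Q = S q' := by
    have h1 : OrderDual.toDual (S Q₀) = OrderDual.toDual (S Q) := hQ₀ Q (le_max_left _ _)
    have h2 : OrderDual.toDual (S Q₀) = OrderDual.toDual (S q') :=
      hQ₀ q' (le_trans (le_max_left _ _) (le_max_right q Q))
    have := h1.symm.trans h2
    exact OrderDual.toDual.injective this
  have humem : N.mkQ u ∈ S q' := by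
    rw [← hSQ]
    exact Submodule.mem_map_of_mem huU
  obtain ⟨u', hu'U, hu'eq⟩ := humem
  -- w' := u - u' lands in F_{p+1}
  have hw'N : u - u' ∈ N := (Submodule.Quotient.eq N).mp hu'eq.symm
  refine ⟨(u - u' : ↥(F p i)).1, hw'N, ?_⟩
  -- (v - d wQ) - d w' = (v - d wq) + d u' ∈ F q' ≤ F q
  have hdu' : d i (u' : C i) ∈ F q' (i + 1) := by simpa [hU] using hu'U
  have key : (v - d i wQ) - d i ((u - u' : ↥(F p i)) : C i) = (v - d i wq) + d i (u' : C i) := by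
    have h1 : ((u - u' : ↥(F p i)) : C i) = (wq - wQ) - (u' : C i) := by
      simp [hu_def]
    rw [h1, map_sub, map_sub]
    abel
  rw [key]
  exact hmono' (i + 1) (le_max_left q Q) (add_mem hfq hdu')

theorem stmt_16
    (C : ℤ → Type) [∀ i, AddCommGroup (C i)] [∀ i, Module ℝ (C i)]
    -- the differential of the cochain complex
    (d : ∀ i, C i →ₗ[ℝ] C (i + 1))
    (hdd : ∀ (i : ℤ) (x : C i), d (i + 1) (d i x) = 0)
    -- the descending filtration, compatible with the differential
    (F : ℕ → ∀ i : ℤ, Submodule ℝ (C i))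
    (hF0 : ∀ i, F 0 i = ⊤)
    (hmono : ∀ n i, F (n + 1) i ≤ F n i)
    (hdF : ∀ n i, ∀ x ∈ F n i, d i x ∈ F n (i + 1))
    -- the filtration is complete …
    (hcomplete : ∀ (i : ℤ) (a : ℕ → C i), (∀ n, a (n + 1) - a n ∈ F n i) →
      ∃ L : C i, ∀ n, L - a n ∈ F n i)
    -- … and Hausdorff …
    (hhaus : ∀ (i : ℤ) (x : C i), (∀ n, x ∈ F n i) → x = 0)
    -- … with degreewise finite-dimensional graded pieces `FₙC/Fₙ₊₁C`
    (hfin : ∀ (n : ℕ) (i : ℤ),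
      FiniteDimensional ℝ (↥(F n i) ⧸ Submodule.comap (F n i).subtype (F (n + 1) i)))
    -- a cocycle `x` that can be pushed into arbitrarily high filtration by coboundaries
    (i : ℤ) (x : C (i + 1)) (hx : d (i + 1) x = 0)
    (y : ℕ → C i)
    (hy : ∀ n : ℕ, x - ∑ j ∈ Finset.range n, d i (y j) ∈ F n (i + 1)) :
    ∃ z : C i, d i z = x := by
  classical
  -- invariant for the recursive construction
  set Q : ℕ → C (i + 1) → Prop :=
    fun p v => v ∈ F p (i + 1) ∧ ∀ q, ∃ w ∈ F p i, v - d i w ∈ F q (i + 1) with hQ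
  have h0 : Q 0 x := by
    refine ⟨(hF0 (i + 1)).symm ▸ Submodule.mem_top, fun q => ?_⟩
    refine ⟨∑ j ∈ Finset.range q, y j, (hF0 i).symm ▸ Submodule.mem_top, ?_⟩
    simpa [map_sum] using hy q
  have step : ∀ p v, Q p v → ∃ w : C i, w ∈ F p i ∧ Q (p + 1) (v - d i w) := by
    intro p v hv
    obtain ⟨w, hw, h1, h2⟩ := stmt16_key C d F hmono hfin i p v hv.2
    exact ⟨w, hw, h1, h2⟩
  obtain ⟨v, w, hv0, hvw⟩ := stmt16_rec_choice Q (fun p w => w ∈ F p i)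
    (fun v w => v - d i w) x h0 step
  -- partial sums
  set s : ℕ → C i := fun n => ∑ j ∈ Finset.range n, w j with hs
  have hvs : ∀ n, v n = x - d i (s n) := by
    intro n
    induction n with
    | zero => simp [hs, hv0]
    | succ n ih =>
      rw [(hvw n).2.2, ih]
      simp [hs, Finset.sum_range_succ, map_add]
      abel
  have hsd : ∀ n, s (n + 1) - s n ∈ F n i := by
    intro n
    have : s (n + 1) - s n = w n := by simp [hs, Finset.sum_range_succ]
    rw [this]; exact (hvw n).2.1
  obtain ⟨z, hz⟩ := hcomplete i s hsd
  refine ⟨z, ?_⟩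
  have hall : ∀ n, x - d i z ∈ F n (i + 1) := by
    intro n
    have h1 : x - d i z = v n - d i (z - s n) := by
      rw [hvs n, map_sub]; abel
    rw [h1]
    exact sub_mem ((hvw n).1.1) (hdF n i _ (hz n))
  have h0' := hhaus (i + 1) (x - d i z) hall
  have : d i z = x := by
    have := sub_eq_zero.mp h0'
    exact this.symm
  exact this
end
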